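/- arXiv:0906.4121 — 2 statements merged into one kernel-verified Lean document; each statement's English description precedes it below -/
import Mathlib

section
/- Degree bound on the inverse transformation: let A ∈ S^{n×n} have full row rank with deg_D A_{ij} ≤ d for all i,j, and let U·A = H with U unimodular and H in Hermite form. Then V := U^{-1} satisfies A = V·H and deg_D V_{ij} ≤ d for all i, j. -/
/-- Abstract presentation of a skew (Ore/differential) polynomial ring `S = K[D; δ]`:
`S` is a ring containing `K` via `ι`, with a distinguished element `D` satisfying the
commutation rule `D * a = a * D + δ a`, and every element of `S` is (uniquely) a finite
sum `∑ aₙ Dⁿ`, with coefficients `coeff` supported on `supp`. -/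
structure DiffPolyRing (K : Type) [CommRing K] (S : Type) [Ring S] (δ : K → K) where
  ι : K →+* S
  D : S
  comm_rule : ∀ a : K, D * ι a = ι a * D + ι (δ a)
  coeff : S → ℕ → K
  supp : S → Finset ℕ
  mem_supp : ∀ f n, n ∈ supp f ↔ coeff f n ≠ 0
  coeff_add : ∀ f g n, coeff (f + g) n = coeff f n + coeff g n
  coeff_ext : ∀ f g : S, (∀ n, coeff f n = coeff g n) → f = g
  coeff_monomial : ∀ (a : K) (i n : ℕ), coeff (ι a * D ^ i) n = if n = i then a else 0
  repr_sum : ∀ f : S, f = ∑ n ∈ supp f, ι (coeff f n) * D ^ n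

namespace DiffPolyRing

variable {K S : Type} [CommRing K] [Ring S] {δ : K → K}

/-- Degree in the variable `D`, with `degD 0 = ⊥` (i.e. `-∞`). -/
noncomputable def degD (R : DiffPolyRing K S δ) (f : S) : WithBot ℕ := (R.supp f).max

/-- Degree in `D` as a natural number (`0` for the zero polynomial). -/
noncomputable def natDegD (R : DiffPolyRing K S δ) (f : S) : ℕ := (R.degD f).unbotD 0

/-- `f` is monic: its leading coefficient (in `D`) is `1`. -/
noncomputable def Monic (R : DiffPolyRing K S δ) (f : S) : Prop :=
  R.coeff f (R.natDegD f) = 1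

/-- `H` is in Hermite form: upper triangular, monic diagonal entries, and each
off-diagonal entry has `D`-degree strictly less than the diagonal entry below it. -/
noncomputable def HermiteForm (R : DiffPolyRing K S δ) {n : ℕ}
    (H : Matrix (Fin n) (Fin n) S) : Prop :=
  (∀ i j, j < i → H i j = 0) ∧ (∀ i, R.Monic (H i i)) ∧
    (∀ i j, i < j → R.degD (H i j) < R.degD (H j j))

/-- The rows of `A` are left `S`-linearly independent. -/
def FullRowRank {n : ℕ} (A : Matrix (Fin n) (Fin n) S) : Prop :=
  ∀ c : Fin n → S, (∀ j, (∑ i, c i * A i j) = 0) → c = 0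

end DiffPolyRing

/-!
Write `v` for a row of `V`, so that `v * H` is the corresponding row of `A = V * H`. If `j` is
the first column with `deg v_j = N > d`, then with `m = deg H_jj` the coefficient of `D ^ (N + m)`
in `(v * H)_j` is the leading coefficient of `v_j`: `H` is upper triangular, `H_jj` is monic, and
for `k < j` the term `v_k * H_kj` has degree at most `d + (m - 1) < N + m`. Since `deg A_ij ≤ d`,
that coefficient vanishes, a contradiction. The degree bounds and leading coefficients of
products come from `D * a = a * D + δ a`: left multiplication by `D` raises the degree by at
most one and shifts the top coefficient without changing it (`δ 0 = 0` follows from the rule).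
-/

lemma WithBot.le_natCast_sub_one_of_lt {x : WithBot ℕ} {m : ℕ} (h : x < m) : x ≤ (m - 1 : ℕ) := by
  rw [Nat.cast_withBot, WithBot.lt_coe_iff] at h
  rw [Nat.cast_withBot, WithBot.le_coe_iff]
  intro a ha
  have := h a ha
  omega

namespace DiffPolyRing

variable {K S : Type} [CommRing K] [Ring S] {δ : K → K} (R : DiffPolyRing K S δ)

@[simp]
lemma coeff_zero (n : ℕ) : R.coeff 0 n = 0 := by
  simpa using R.coeff_monomial 0 0 n

noncomputable def coeffAddHom (n : ℕ) : S →+ K where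
  toFun f := R.coeff f n
  map_zero' := R.coeff_zero n
  map_add' f g := R.coeff_add f g n

lemma coeff_sum {α : Type*} (s : Finset α) (f : α → S) (n : ℕ) :
    R.coeff (∑ i ∈ s, f i) n = ∑ i ∈ s, R.coeff (f i) n :=
  map_sum (R.coeffAddHom n) f s

lemma sum_supp_ite_eq (f : S) (φ : K → K) (hφ : φ 0 = 0) (m : ℕ) :
    (∑ n ∈ R.supp f, if m = n then φ (R.coeff f n) else 0) = φ (R.coeff f m) := by
  rw [Finset.sum_ite_eq]
  split_ifs with hm
  · rfl
  · rw [not_not.1 (mt (R.mem_supp f m).2 hm), hφ]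

lemma delta_zero (R : DiffPolyRing K S δ) : δ 0 = 0 := by
  have h : R.ι (δ 0) = 0 := by simpa using (R.comm_rule 0).symm
  simpa [h] using (R.coeff_monomial (δ 0) 0 0).symm

lemma coeff_ι_mul (c : K) (f : S) (m : ℕ) : R.coeff (R.ι c * f) m = c * R.coeff f m := by
  conv_lhs => rw [R.repr_sum f]
  simp_rw [Finset.mul_sum, R.coeff_sum, ← mul_assoc, ← map_mul, R.coeff_monomial]
  exact R.sum_supp_ite_eq f (c * ·) (mul_zero c) m

lemma D_mul_ι_mul_D_pow (c : K) (n : ℕ) :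
    R.D * (R.ι c * R.D ^ n) = R.ι c * R.D ^ (n + 1) + R.ι (δ c) * R.D ^ n := by
  rw [← mul_assoc, R.comm_rule, add_mul, mul_assoc, ← pow_succ']

lemma coeff_D_mul_succ (f : S) (m : ℕ) :
    R.coeff (R.D * f) (m + 1) = R.coeff f m + δ (R.coeff f (m + 1)) := by
  conv_lhs => rw [R.repr_sum f]
  simp_rw [Finset.mul_sum, R.coeff_sum, D_mul_ι_mul_D_pow, R.coeff_add, R.coeff_monomial,
    Nat.add_right_cancel_iff, Finset.sum_add_distrib]
  congr 1
  · exact R.sum_supp_ite_eq f id rfl m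
  · exact R.sum_supp_ite_eq f δ R.delta_zero (m + 1)

lemma degD_le_iff {f : S} {n : ℕ} : R.degD f ≤ n ↔ ∀ m, n < m → R.coeff f m = 0 := by
  rw [degD, Finset.max_le_iff]
  refine ⟨fun h m hm => ?_, fun h m hm => ?_⟩
  · by_contra hc
    exact absurd (WithBot.coe_le_coe.1 (h m ((R.mem_supp f m).2 hc))) (not_le.2 hm)
  · by_contra hc
    exact (R.mem_supp f m).1 hm (h m (WithBot.coe_lt_coe.1 (not_le.1 hc)))

lemma le_of_mem_supp {f : S} {n m : ℕ} (hf : R.degD f ≤ n) (hm : m ∈ R.supp f) : m ≤ n := by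
  by_contra hc
  exact (R.mem_supp f m).1 hm (R.degD_le_iff.1 hf m (not_le.1 hc))

lemma coeff_ne_zero_of_degD_eq {f : S} {n : ℕ} (hf : R.degD f = n) : R.coeff f n ≠ 0 :=
  (R.mem_supp f n).1 (Finset.mem_of_max hf)

lemma degD_le_natDegD (f : S) : R.degD f ≤ R.natDegD f := by
  cases h : R.degD f with
  | bot => exact bot_le
  | coe m => rw [natDegD, h]; exact le_rfl

lemma degD_D_mul_le {f : S} {n : ℕ} (hf : R.degD f ≤ n) : R.degD (R.D * f) ≤ (n + 1 : ℕ) := by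
  refine R.degD_le_iff.2 fun m hm => ?_
  obtain ⟨m, rfl⟩ : ∃ k, m = k + 1 := ⟨m - 1, by omega⟩
  rw [R.coeff_D_mul_succ, R.degD_le_iff.1 hf m (by omega), R.degD_le_iff.1 hf (m + 1) (by omega),
    R.delta_zero, add_zero]

lemma coeff_D_mul_of_degD_le {f : S} {n : ℕ} (hf : R.degD f ≤ n) :
    R.coeff (R.D * f) (n + 1) = R.coeff f n := by
  rw [R.coeff_D_mul_succ, R.degD_le_iff.1 hf (n + 1) (by omega), R.delta_zero, add_zero]

lemma degD_D_pow_mul_le {f : S} {n : ℕ} (hf : R.degD f ≤ n) (i : ℕ) :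
    R.degD (R.D ^ i * f) ≤ (n + i : ℕ) := by
  induction i with
  | zero => simpa using hf
  | succ i ih => rw [pow_succ', mul_assoc]; exact R.degD_D_mul_le ih

lemma coeff_D_pow_mul_of_degD_le {f : S} {n : ℕ} (hf : R.degD f ≤ n) (i : ℕ) :
    R.coeff (R.D ^ i * f) (n + i) = R.coeff f n := by
  induction i with
  | zero => simp
  | succ i ih =>
    rw [pow_succ', mul_assoc, ← add_assoc, R.coeff_D_mul_of_degD_le (R.degD_D_pow_mul_le hf i), ih]

lemma coeff_mul (f g : S) (m : ℕ) :
    R.coeff (f * g) m = ∑ n ∈ R.supp f, R.coeff f n * R.coeff (R.D ^ n * g) m := by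
  conv_lhs => rw [R.repr_sum f]
  simp_rw [Finset.sum_mul, R.coeff_sum, mul_assoc, R.coeff_ι_mul]

lemma degD_mul_le {f g : S} {a b : ℕ} (hf : R.degD f ≤ a) (hg : R.degD g ≤ b) :
    R.degD (f * g) ≤ (a + b : ℕ) := by
  refine R.degD_le_iff.2 fun m hm => ?_
  rw [R.coeff_mul]
  refine Finset.sum_eq_zero fun n hn => ?_
  have hna := R.le_of_mem_supp hf hn
  rw [R.degD_le_iff.1 (R.degD_D_pow_mul_le hg n) m (by omega), mul_zero]

lemma coeff_mul_of_degD_le {f g : S} {a b : ℕ} (hf : R.degD f ≤ a) (hg : R.degD g ≤ b) :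
    R.coeff (f * g) (a + b) = R.coeff f a * R.coeff g b := by
  rw [R.coeff_mul, ← R.sum_supp_ite_eq f (· * R.coeff g b) (zero_mul _) a]
  refine Finset.sum_congr rfl fun n hn => ?_
  split_ifs with han
  · rw [← han, add_comm, R.coeff_D_pow_mul_of_degD_le hg]
  · have hna : n < a := lt_of_le_of_ne (R.le_of_mem_supp hf hn) (Ne.symm han)
    rw [R.degD_le_iff.1 (R.degD_D_pow_mul_le hg n) (a + b) (by omega), mul_zero]

variable {R} in
theorem HermiteForm.degD_le_of_degD_vecMul_le {n : ℕ} {H : Matrix (Fin n) (Fin n) S}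
    (hH : R.HermiteForm H) {v : Fin n → S} {d : ℕ} (hvH : ∀ j, R.degD (Matrix.vecMul v H j) ≤ d)
    (j : Fin n) : R.degD (v j) ≤ d := by
  obtain ⟨hlower, hmonic, hoff⟩ := hH
  induction j using WellFoundedLT.induction with
  | _ j ih =>
  by_contra hvj
  obtain ⟨N, hN⟩ : ∃ N : ℕ, R.degD (v j) = N := by
    cases h : R.degD (v j) with
    | bot => exact absurd bot_le (h ▸ hvj)
    | coe N => exact ⟨N, rfl⟩
  have hdN : d < N := by
    by_contra h
    exact hvj (hN ▸ by exact_mod_cast not_lt.1 h)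
  set m := R.natDegD (H j j)
  have hHjj : R.degD (H j j) ≤ m := R.degD_le_natDegD _
  have hterm : ∀ k, k ≠ j → R.coeff (v k * H k j) (N + m) = 0 := by
    intro k hk
    rcases hk.lt_or_gt with hkj | hjk
    · have hHkj := WithBot.le_natCast_sub_one_of_lt ((hoff k j hkj).trans_le hHjj)
      exact R.degD_le_iff.1 (R.degD_mul_le (ih k hkj) hHkj) _ (by omega)
    · rw [hlower k j hjk, mul_zero, R.coeff_zero]
  have hcoeff : R.coeff (Matrix.vecMul v H j) (N + m) = R.coeff (v j) N := by
    rw [Matrix.vecMul, dotProduct, R.coeff_sum,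
      Finset.sum_eq_single j (fun k _ => hterm k) (by simp),
      R.coeff_mul_of_degD_le hN.le hHjj, hmonic j, mul_one]
  exact R.coeff_ne_zero_of_degD_eq hN (hcoeff ▸ R.degD_le_iff.1 (hvH j) _ (by omega))

end DiffPolyRing

theorem degD_inverse_multiplier_le_general
    {F : Type} [Field F] {S : Type} [Ring S]
    (δ : RatFunc F → RatFunc F)
    (R : DiffPolyRing (RatFunc F) S δ) {n : ℕ}
    (A U V H : Matrix (Fin n) (Fin n) S) (d : ℕ)
    (hdeg : ∀ i j, R.degD (A i j) ≤ (d : WithBot ℕ))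
    (hVU : V * U = 1)
    (hUA : U * A = H) (hH : R.HermiteForm H) :
    A = V * H ∧ ∀ i j, R.degD (V i j) ≤ (d : WithBot ℕ) := by
  have hAVH : A = V * H := by rw [← hUA, ← Matrix.mul_assoc, hVU, Matrix.one_mul]
  refine ⟨hAVH, fun i => hH.degD_le_of_degD_vecMul_le fun j => ?_⟩
  rw [← Matrix.mul_apply_eq_vecMul, ← hAVH]
  exact hdeg i j

/-- if `U·A = H` with `U` unimodular (inverse `V`), `H` in Hermite form,
and `deg_D A_{ij} ≤ d`, then `A = V·H` and `deg_D V_{ij} ≤ d`. -/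
theorem degD_inverse_multiplier_le
    {F : Type} [Field F] [CharZero F] {S : Type} [Ring S]
    (δ : RatFunc F → RatFunc F)
    (hδadd : ∀ a b : RatFunc F, δ (a + b) = δ a + δ b)
    (hδmul : ∀ a b : RatFunc F, δ (a * b) = a * δ b + δ a * b)
    (R : DiffPolyRing (RatFunc F) S δ) {n : ℕ}
    (A U V H : Matrix (Fin n) (Fin n) S) (d : ℕ)
    (hA : DiffPolyRing.FullRowRank A)
    (hdeg : ∀ i j, R.degD (A i j) ≤ (d : WithBot ℕ))
    (hUV : U * V = 1) (hVU : V * U = 1)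
    (hUA : U * A = H) (hH : R.HermiteForm H) :
    A = V * H ∧ ∀ i j, R.degD (V i j) ≤ (d : WithBot ℕ) :=
  degD_inverse_multiplier_le_general δ R A U V H d hdeg hVU hUA hH
end

section
/- With notation as in the solvability criterion: if P·A = G where G is upper triangular with monic diagonal entries whose D-degrees equal exactly the diagonal degrees (h_1,...,h_n) of the Hermite form H of A, and each off-diagonal G_{ij} (i<j) has deg_D G_{ij} < h_j, then G = H and P is unimodular. -/
/-!
Write `Q = P U⁻¹`, so that `Q H = G`. Since `(a Dⁱ)(b Dᵏ) = ab Dⁱ⁺ᵏ + (lower terms)`, leading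
coefficients multiply and `deg (e f) ≥ deg f` for `e ≠ 0`. Going through the columns from left to
right, once the earlier columns of `E = Q - 1` vanish, `E i j * H j j = G i j - H i j`, and the
right side has degree `< h j` (on the diagonal because both entries are monic of degree `h j`).
Hence `E = 0`, i.e. `Q = 1`: then `G = H` and `P = U` is unimodular.
-/

lemma Matrix.BlockTriangular.mul_apply_eq_mul_diag {ι α : Type*} [Fintype ι] [LinearOrder ι]
    [NonUnitalNonAssocSemiring α] {E H : Matrix ι ι α} (hH : H.BlockTriangular id) {i j : ι}
    (hE : ∀ k < j, E i k = 0) : (E * H) i j = E i j * H j j := by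
  rw [Matrix.mul_apply, Finset.sum_eq_single j _ (by simp)]
  intro k _ hkj
  rcases hkj.lt_or_gt with hk | hk
  · rw [hE k hk, zero_mul]
  · rw [hH hk, mul_zero]

namespace DiffPolyRing

variable {K S : Type} [CommRing K] [Ring S] {δ : K → K} (R : DiffPolyRing K S δ)

def coeffHom (n : ℕ) : S →+ K :=
  AddMonoidHom.mk' (R.coeff · n) fun f g => R.coeff_add f g n

@[simp]
lemma coeffHom_apply (f : S) (n : ℕ) : R.coeffHom n f = R.coeff f n := rfl

lemma coeff_sub (f g : S) (n : ℕ) : R.coeff (f - g) n = R.coeff f n - R.coeff g n :=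
  map_sub (R.coeffHom n) f g

@[simp]
lemma degD_zero : R.degD 0 = ⊥ := by
  rw [degD, Finset.max_eq_bot, Finset.eq_empty_iff_forall_notMem]
  simp [R.mem_supp]

lemma degD_lt_iff {f : S} {n : ℕ} : R.degD f < n ↔ ∀ m, n ≤ m → R.coeff f m = 0 := by
  rw [degD, Finset.max_eq_sup_withBot, Nat.cast_withBot, Finset.sup_lt_iff (WithBot.bot_lt_coe n)]
  refine forall_congr' fun m => ?_
  rw [R.mem_supp, WithBot.coe_lt_coe, ← not_le, not_imp_not]

lemma le_natDegD_of_mem {f : S} {m : ℕ} (hm : m ∈ R.supp f) : m ≤ R.natDegD f := by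
  obtain ⟨d, hd⟩ := Finset.max_of_mem hm
  rw [natDegD, degD, hd, WithBot.unbotD_coe]
  exact Finset.le_max_of_eq hm hd

lemma coeff_eq_zero_of_natDegD_lt {f : S} {m : ℕ} (hm : R.natDegD f < m) : R.coeff f m = 0 := by
  by_contra h
  exact hm.not_ge (R.le_natDegD_of_mem ((R.mem_supp f m).2 h))

lemma degD_eq_natDegD {f : S} (hf : f ≠ 0) : R.degD f = R.natDegD f := by
  obtain ⟨m, hm⟩ : ∃ m, R.coeff f m ≠ 0 := by
    by_contra! h
    exact hf (R.coeff_ext f 0 fun n => by rw [h, coeff_zero])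
  obtain ⟨d, hd⟩ := Finset.max_of_mem ((R.mem_supp f m).2 hm)
  rw [natDegD, degD, hd, WithBot.unbotD_coe, Nat.cast_withBot]

lemma coeff_natDegD_ne_zero {f : S} (hf : f ≠ 0) : R.coeff f (R.natDegD f) ≠ 0 :=
  (R.mem_supp f _).1 (Finset.mem_of_max (R.degD_eq_natDegD hf))

lemma degD_sub_le (f g : S) : R.degD (f - g) ≤ max (R.degD f) (R.degD g) := by
  refine (Finset.max_mono fun m hm => ?_).trans_eq Finset.max_union
  rw [R.mem_supp, R.coeff_sub] at hm
  rw [Finset.mem_union, R.mem_supp, R.mem_supp]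
  by_contra! h
  exact hm (by rw [h.1, h.2, sub_zero])

variable {R} in
lemma Monic.ne_zero [Nontrivial K] {f : S} (hf : R.Monic f) : f ≠ 0 := by
  rintro rfl
  simp [Monic] at hf

lemma degD_sub_lt_of_monic [Nontrivial K] {f g : S} (hf : R.Monic f) (hg : R.Monic g)
    (hfg : R.degD f = R.degD g) : R.degD (f - g) < R.degD g := by
  have hnat : R.natDegD f = R.natDegD g := by rw [natDegD, natDegD, hfg]
  rw [R.degD_eq_natDegD hg.ne_zero, R.degD_lt_iff]
  intro m hm
  rw [R.coeff_sub]
  rcases hm.eq_or_lt with rfl | hlt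
  · rw [hg, ← hnat, hf, sub_self]
  · rw [R.coeff_eq_zero_of_natDegD_lt hlt, R.coeff_eq_zero_of_natDegD_lt (hnat ▸ hlt),
      sub_zero]

def degreeLT (n : ℕ) : AddSubgroup S :=
  ⨅ (m) (_ : n ≤ m), (R.coeffHom m).ker

lemma mem_degreeLT {f : S} {n : ℕ} : f ∈ R.degreeLT n ↔ ∀ m, n ≤ m → R.coeff f m = 0 := by
  simp [degreeLT, AddSubgroup.mem_iInf]

lemma monomial_mem_degreeLT (a : K) {i n : ℕ} (h : i < n) : R.ι a * R.D ^ i ∈ R.degreeLT n :=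
  R.mem_degreeLT.2 fun m hm => by rw [R.coeff_monomial, if_neg (by omega)]

lemma map_mem_degreeLT (φ : S →+ S) {n n' : ℕ}
    (hφ : ∀ a m, m < n → φ (R.ι a * R.D ^ m) ∈ R.degreeLT n') {f : S}
    (hf : f ∈ R.degreeLT n) : φ f ∈ R.degreeLT n' := by
  rw [R.repr_sum f, map_sum]
  refine AddSubgroup.sum_mem _ fun m hm => hφ _ _ ?_
  by_contra! h
  exact (R.mem_supp f m).1 hm (R.mem_degreeLT.1 hf m h)

lemma ι_mul_mem_degreeLT (a : K) {f : S} {n : ℕ} (hf : f ∈ R.degreeLT n) :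
    R.ι a * f ∈ R.degreeLT n :=
  R.map_mem_degreeLT (AddMonoidHom.mulLeft (R.ι a)) (fun b m hm => by
    show R.ι a * (R.ι b * R.D ^ m) ∈ _
    rw [← mul_assoc, ← map_mul]
    exact R.monomial_mem_degreeLT _ hm) hf

lemma mul_D_pow_mem_degreeLT (k : ℕ) {f : S} {n : ℕ} (hf : f ∈ R.degreeLT n) :
    f * R.D ^ k ∈ R.degreeLT (n + k) :=
  R.map_mem_degreeLT (AddMonoidHom.mulRight (R.D ^ k)) (fun b m hm => by
    rw [AddMonoidHom.mulRight_apply, mul_assoc, ← pow_add]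
    exact R.monomial_mem_degreeLT _ (by omega)) hf

lemma D_mul_mem_degreeLT {f : S} {n : ℕ} (hf : f ∈ R.degreeLT n) :
    R.D * f ∈ R.degreeLT (n + 1) :=
  R.map_mem_degreeLT (AddMonoidHom.mulLeft R.D) (fun b m hm => by
    show R.D * (R.ι b * R.D ^ m) ∈ _
    rw [← mul_assoc, R.comm_rule, add_mul, mul_assoc, ← pow_succ']
    exact add_mem (R.monomial_mem_degreeLT _ (by omega))
      (R.monomial_mem_degreeLT _ (by omega))) hf

lemma D_pow_mul_ι_sub_mem_degreeLT (i : ℕ) (a : K) :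
    R.D ^ i * R.ι a - R.ι a * R.D ^ i ∈ R.degreeLT i := by
  induction i with
  | zero => simp
  | succ i ih =>
    have h : R.D ^ (i + 1) * R.ι a - R.ι a * R.D ^ (i + 1) =
        R.D * (R.D ^ i * R.ι a - R.ι a * R.D ^ i) + R.ι (δ a) * R.D ^ i := by
      rw [pow_succ', mul_sub, ← mul_assoc R.D (R.ι a), R.comm_rule]
      noncomm_ring
    rw [h]
    exact add_mem (R.D_mul_mem_degreeLT ih) (R.monomial_mem_degreeLT _ (Nat.lt_succ_self i))

lemma coeff_monomial_mul_monomial (a b : K) {i k N : ℕ} (h : i + k ≤ N) :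
    R.coeff (R.ι a * R.D ^ i * (R.ι b * R.D ^ k)) N = if N = i + k then a * b else 0 := by
  have hsplit : R.ι a * R.D ^ i * (R.ι b * R.D ^ k) = R.ι (a * b) * R.D ^ (i + k) +
      R.ι a * ((R.D ^ i * R.ι b - R.ι b * R.D ^ i) * R.D ^ k) := by
    rw [map_mul, pow_add]
    noncomm_ring
  have hlow := R.ι_mul_mem_degreeLT a
    (R.mul_D_pow_mem_degreeLT k (R.D_pow_mul_ι_sub_mem_degreeLT i b))
  rw [hsplit, R.coeff_add, R.coeff_monomial, R.mem_degreeLT.1 hlow N h, add_zero]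

lemma coeff_mul_natDegD_add_natDegD (f g : S) :
    R.coeff (f * g) (R.natDegD f + R.natDegD g) =
      R.coeff f (R.natDegD f) * R.coeff g (R.natDegD g) := by
  set df := R.natDegD f
  set dg := R.natDegD g
  have hterm : ∀ m ∈ R.supp f, ∀ k ∈ R.supp g,
      R.coeff (R.ι (R.coeff f m) * R.D ^ m * (R.ι (R.coeff g k) * R.D ^ k)) (df + dg) =
        if m = df ∧ k = dg then R.coeff f m * R.coeff g k else 0 := by
    intro m hm k hk
    have := R.le_natDegD_of_mem hm
    have := R.le_natDegD_of_mem hk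
    rw [R.coeff_monomial_mul_monomial _ _ (by omega)]
    exact if_congr (by omega) rfl rfl
  conv_lhs => rw [R.repr_sum f, R.repr_sum g, Finset.sum_mul_sum, R.coeff_sum]
  rw [Finset.sum_congr rfl fun m hm =>
    (R.coeff_sum _ _ _).trans (Finset.sum_congr rfl (hterm m hm))]
  simp only [ite_and, Finset.sum_ite_irrel, Finset.sum_const_zero, Finset.sum_ite_eq']
  split_ifs with hf hg
  · rfl
  · rw [not_ne_iff.1 (mt (R.mem_supp g dg).2 hg), mul_zero]
  · rw [not_ne_iff.1 (mt (R.mem_supp f df).2 hf), zero_mul]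

lemma degD_le_degD_mul [NoZeroDivisors K] {e : S} (he : e ≠ 0) (f : S) :
    R.degD f ≤ R.degD (e * f) := by
  rcases eq_or_ne f 0 with rfl | hf
  · simp
  have hlead : R.coeff (e * f) (R.natDegD e + R.natDegD f) ≠ 0 := by
    rw [R.coeff_mul_natDegD_add_natDegD]
    exact mul_ne_zero (R.coeff_natDegD_ne_zero he) (R.coeff_natDegD_ne_zero hf)
  calc R.degD f = R.natDegD f := R.degD_eq_natDegD hf
    _ ≤ (R.natDegD e + R.natDegD f : ℕ) := by exact_mod_cast Nat.le_add_left _ _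
    _ ≤ R.degD (e * f) := by
      rw [Nat.cast_withBot]
      exact Finset.le_max ((R.mem_supp _ _).2 hlead)

lemma eq_zero_of_degD_mul_lt [NoZeroDivisors K] {e f : S} (h : R.degD (e * f) < R.degD f) :
    e = 0 := by
  by_contra he
  exact (R.degD_le_degD_mul he f).not_gt h

lemma eq_zero_of_degD_mul_apply_lt [NoZeroDivisors K] {ι : Type*} [Fintype ι] [LinearOrder ι]
    {E H : Matrix ι ι S} (hH : H.BlockTriangular id)
    (hEH : ∀ i j, R.degD ((E * H) i j) < R.degD (H j j)) : E = 0 := by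
  ext i j
  rw [Matrix.zero_apply]
  induction j using WellFoundedLT.induction generalizing i with
  | ind j ih =>
    have hij := hEH i j
    rw [hH.mul_apply_eq_mul_diag fun k hk => ih k hk i] at hij
    exact R.eq_zero_of_degD_mul_lt hij

variable {R} {n : ℕ} {Q H G : Matrix (Fin n) (Fin n) S}

lemma HermiteForm.blockTriangular (hH : R.HermiteForm H) : H.BlockTriangular id :=
  fun i j hij => hH.1 i j hij

lemma HermiteForm.degD_sub_apply_lt [Nontrivial K] (hH : R.HermiteForm H) (hG : R.HermiteForm G)
    (hdeg : ∀ i, R.degD (G i i) = R.degD (H i i)) (i j : Fin n) :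
    R.degD ((G - H) i j) < R.degD (H j j) := by
  rw [Matrix.sub_apply]
  rcases lt_trichotomy i j with hij | rfl | hji
  · exact (R.degD_sub_le _ _).trans_lt
      (max_lt ((hG.2.2 i j hij).trans_eq (hdeg j)) (hH.2.2 i j hij))
  · exact R.degD_sub_lt_of_monic (hG.2.1 i) (hH.2.1 i) (hdeg i)
  · rw [hG.1 i j hji, hH.1 i j hji, sub_zero, degD_zero, R.degD_eq_natDegD (hH.2.1 j).ne_zero]
    exact WithBot.bot_lt_coe _

lemma HermiteForm.eq_one_of_mul_eq [NoZeroDivisors K] [Nontrivial K] (hH : R.HermiteForm H)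
    (hG : R.HermiteForm G) (hdeg : ∀ i, R.degD (G i i) = R.degD (H i i)) (hQ : Q * H = G) :
    Q = 1 :=
  sub_eq_zero.1 <| R.eq_zero_of_degD_mul_apply_lt hH.blockTriangular fun i j => by
    rw [Matrix.sub_mul, Matrix.one_mul, hQ]
    exact hH.degD_sub_apply_lt hG hdeg i j

end DiffPolyRing

theorem hermite_degree_equality_forces_hermite_general
    {F : Type} [Field F] {S : Type} [Ring S]
    (δ : RatFunc F → RatFunc F)
    (R : DiffPolyRing (RatFunc F) S δ) {n : ℕ}
    (A U H P G : Matrix (Fin n) (Fin n) S) (h : Fin n → ℕ)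
    (hU : IsUnit U) (hUA : U * A = H) (hH : R.HermiteForm H)
    (hdiag : ∀ i, R.degD (H i i) = (h i : WithBot ℕ))
    (hPA : P * A = G)
    (hGtri : ∀ i j, j < i → G i j = 0)
    (hGdiag : ∀ i, R.Monic (G i i) ∧ R.degD (G i i) = (h i : WithBot ℕ))
    (hGoff : ∀ i j, i < j → R.degD (G i j) < (h j : WithBot ℕ)) :
    G = H ∧ IsUnit P := by
  obtain ⟨u, rfl⟩ := hU
  have hdeg : ∀ i, R.degD (G i i) = R.degD (H i i) := fun i => (hGdiag i).2.trans (hdiag i).symm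
  have hG : R.HermiteForm G :=
    ⟨hGtri, fun i => (hGdiag i).1, fun i j hij => (hGoff i j hij).trans_eq (hGdiag j).2.symm⟩
  have hQ : P * (↑u⁻¹ : Matrix (Fin n) (Fin n) S) * H = G := by
    rw [← hUA, Matrix.mul_assoc, ← Matrix.mul_assoc _ _ A, u.inv_mul, Matrix.one_mul, hPA]
  have hQ1 : P * (↑u⁻¹ : Matrix (Fin n) (Fin n) S) = 1 := hH.eq_one_of_mul_eq hG hdeg hQ
  have hPu : P = u := by
    rw [← Matrix.mul_one P, ← u.inv_mul, ← Matrix.mul_assoc, hQ1, Matrix.one_mul]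
  exact ⟨by rw [← hQ, hQ1, Matrix.one_mul], hPu ▸ u.isUnit⟩

/-- if `P·A = G` where `G` is upper triangular with monic diagonal
entries of exactly the diagonal degrees `h` of the Hermite form `H` of `A`, and
off-diagonal degrees `< h j`, then `G = H` and `P` is unimodular. -/
theorem hermite_degree_equality_forces_hermite
    {F : Type} [Field F] [CharZero F] {S : Type} [Ring S]
    (δ : RatFunc F → RatFunc F)
    (hδadd : ∀ a b : RatFunc F, δ (a + b) = δ a + δ b)
    (hδmul : ∀ a b : RatFunc F, δ (a * b) = a * δ b + δ a * b)
    (R : DiffPolyRing (RatFunc F) S δ) {n : ℕ}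
    (A U H P G : Matrix (Fin n) (Fin n) S) (h : Fin n → ℕ)
    (hA : DiffPolyRing.FullRowRank A)
    (hU : IsUnit U) (hUA : U * A = H) (hH : R.HermiteForm H)
    (hdiag : ∀ i, R.degD (H i i) = (h i : WithBot ℕ))
    (hPA : P * A = G)
    (hGtri : ∀ i j, j < i → G i j = 0)
    (hGdiag : ∀ i, R.Monic (G i i) ∧ R.degD (G i i) = (h i : WithBot ℕ))
    (hGoff : ∀ i j, i < j → R.degD (G i j) < (h j : WithBot ℕ)) :
    G = H ∧ IsUnit P :=
  hermite_degree_equality_forces_hermite_general δ R A U H P G h hU hUA hH hdiag hPA hGtri hGdiag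
    hGoff
end
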